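/- For bi-periodic Fibonacci polynomials and m ≥ n ≥ 1 with m + n even, q_{m−n}(x) = (−1)^(n+1) (q_{m+1}(x) q_n(x) − q_m(x) q_{n+1}(x)). -/

import Mathlib

/-!
When `m` and `n` have the same parity, the recurrences for `q (m + 2)` and `q (n + 2)` use the
same coefficient, so the cross term `q (m + 1) * q n - q m * q (n + 1)` changes sign when both
indices advance by one. Starting from the value `-q k` at `(k, 0)`, after `n` steps the cross term
at `(k + n, n)` is `(-1) ^ (n + 1) * q k`.
-/

/-- Bi-periodic Fibonacci polynomials (evaluated at x): q 0 = 0, q 1 = 1,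
    q n = a*x*q (n-1) + q (n-2) if n odd, q n = b*x*q (n-1) + q (n-2) if n even. -/
def bpFibP (a b x : ℝ) : ℕ → ℝ
  | 0 => 0
  | 1 => 1
  | n + 2 => (if Even (n + 2) then b * x else a * x) * bpFibP a b x (n + 1) + bpFibP a b x n

lemma bpFibP_add_two (a b x : ℝ) (n : ℕ) :
    bpFibP a b x (n + 2) =
      (if Even n then b * x else a * x) * bpFibP a b x (n + 1) + bpFibP a b x n := by
  simp only [bpFibP, Nat.even_add, even_two, iff_true]

lemma bpFibP_cross_add_one (a b x : ℝ) {m n : ℕ} (h : Even (m + n)) :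
    bpFibP a b x (m + 2) * bpFibP a b x (n + 1) - bpFibP a b x (m + 1) * bpFibP a b x (n + 2) =
      -(bpFibP a b x (m + 1) * bpFibP a b x n - bpFibP a b x m * bpFibP a b x (n + 1)) := by
  simp only [bpFibP_add_two, Nat.even_add.mp h]
  ring

lemma bpFibP_eq_neg_one_pow_mul_cross (a b x : ℝ) {k : ℕ} (hk : Even k) (n : ℕ) :
    bpFibP a b x k = (-1) ^ (n + 1) *
      (bpFibP a b x (k + n + 1) * bpFibP a b x n - bpFibP a b x (k + n) * bpFibP a b x (n + 1)) := by
  induction n with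
  | zero => simp [bpFibP]
  | succ n ih =>
    have hkn : Even (k + n + n) := by rw [add_assoc]; exact hk.add ⟨n, rfl⟩
    rw [ih, ← add_assoc, bpFibP_cross_add_one a b x hkn]
    ring

theorem bpFibP_sub_even_general (a b x : ℝ) (m n : ℕ)
    (hmn : n ≤ m) (h : Even (m + n)) :
    bpFibP a b x (m - n) =
      (-1 : ℝ) ^ (n + 1) *
        (bpFibP a b x (m + 1) * bpFibP a b x n - bpFibP a b x m * bpFibP a b x (n + 1)) := by
  obtain ⟨k, rfl⟩ := Nat.exists_eq_add_of_le' hmn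
  have hk : Even k := by
    rw [add_assoc] at h
    exact (Nat.even_add.mp h).mpr ⟨n, rfl⟩
  rw [Nat.add_sub_cancel]
  exact bpFibP_eq_neg_one_pow_mul_cross a b x hk n

theorem bpFibP_sub_even (a b x : ℝ) (ha : a ≠ 0) (hb : b ≠ 0) (m n : ℕ)
    (hn : 1 ≤ n) (hmn : n ≤ m) (h : Even (m + n)) :
    bpFibP a b x (m - n) =
      (-1 : ℝ) ^ (n + 1) *
        (bpFibP a b x (m + 1) * bpFibP a b x n - bpFibP a b x m * bpFibP a b x (n + 1)) :=
  bpFibP_sub_even_general a b x m n hmn h
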